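/- arXiv:2309.00266 — 6 statements merged into one kernel-verified Lean document; each statement's English description precedes it below -/
import Mathlib

section
/- Let X be a finite-dimensional normed space over ℝ or ℂ, let 1 ≤ p < ∞, and let {f_j}_{j=1}^n and {g_k}_{k=1}^m be Parseval p-frames for X. Set X_f := {z ∈ X : f_j(z) ≠ 0 for all 1≤j≤n} and X_g := {w ∈ X : g_k(w) ≠ 0 for all 1≤k≤m}. Then for every x ∈ X_f ∩ X_g, S_f(x) + S_g(x) ≥ -p · log( sup_{y ∈ X_f ∩ X_g, ‖y‖=1} max_{1≤j≤n, 1≤k≤m} |f_j(y) g_k(y)| ). -/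
open Finset

lemma entropy_ge {n : ℕ} (a : Fin n → ℝ) (ha : ∀ j, 0 < a j) (hsum : ∑ j, a j = 1)
    (M : ℝ) (hle : ∀ j, a j ≤ M) :
    -∑ j, a j * Real.log (a j) ≥ -Real.log M := by
  have h1 : ∑ j, a j * Real.log (a j) ≤ ∑ j, a j * Real.log M := by
    apply Finset.sum_le_sum
    intro j _
    exact mul_le_mul_of_nonneg_left (Real.log_le_log (ha j) (hle j)) (ha j).le
  have h2 : ∑ j, a j * Real.log M = Real.log M := by
    rw [← Finset.sum_mul, hsum, one_mul]
  linarith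

theorem stmt_2 {𝕜 X : Type*} [RCLike 𝕜] [NormedAddCommGroup X] [NormedSpace 𝕜 X]
    [FiniteDimensional 𝕜 X] [Nontrivial X]
    (p : ℝ) (hp : 1 ≤ p) {n m : ℕ}
    (f : Fin n → X →L[𝕜] 𝕜) (g : Fin m → X →L[𝕜] 𝕜)
    (hf : ∀ x : X, ‖x‖ ^ p = ∑ j, ‖f j x‖ ^ p)
    (hg : ∀ x : X, ‖x‖ ^ p = ∑ k, ‖g k x‖ ^ p)
    (x : X) (hxf : ∀ j, f j x ≠ 0) (hxg : ∀ k, g k x ≠ 0) :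
    (-∑ j, ‖f j ((‖x‖ : 𝕜)⁻¹ • x)‖ ^ p * Real.log (‖f j ((‖x‖ : 𝕜)⁻¹ • x)‖ ^ p)) +
      (-∑ k, ‖g k ((‖x‖ : 𝕜)⁻¹ • x)‖ ^ p * Real.log (‖g k ((‖x‖ : 𝕜)⁻¹ • x)‖ ^ p)) ≥
      -p * Real.log
        (⨆ y : {y : X // ‖y‖ = 1 ∧ (∀ j, f j y ≠ 0) ∧ (∀ k, g k y ≠ 0)},
          ⨆ j, ⨆ k, ‖f j (y : X)‖ * ‖g k (y : X)‖) := by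
  have hp0 : (0:ℝ) < p := lt_of_lt_of_le one_pos hp
  obtain ⟨z, hz⟩ := exists_ne (0 : X)
  have hz' : (0:ℝ) < ‖z‖ := norm_pos_iff.mpr hz
  have hn : 0 < n := by
    rcases Nat.eq_zero_or_pos n with h | h
    · exfalso
      have := hf z
      subst h
      simp only [Finset.univ_eq_empty, Finset.sum_empty] at this
      exact absurd this (ne_of_gt (Real.rpow_pos_of_pos hz' p))
    · exact h
  have hm : 0 < m := by
    rcases Nat.eq_zero_or_pos m with h | h
    · exfalso
      have := hg z
      subst h
      simp only [Finset.univ_eq_empty, Finset.sum_empty] at this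
      exact absurd this (ne_of_gt (Real.rpow_pos_of_pos hz' p))
    · exact h
  haveI : Nonempty (Fin n) := ⟨⟨0, hn⟩⟩
  haveI : Nonempty (Fin m) := ⟨⟨0, hm⟩⟩
  have hx0 : x ≠ 0 := by
    intro h
    exact hxf ⟨0, hn⟩ (by simp [h])
  have hxn : (0:ℝ) < ‖x‖ := norm_pos_iff.mpr hx0
  set u : X := (‖x‖ : 𝕜)⁻¹ • x with hu_def
  have hu : ‖u‖ = 1 := by
    rw [hu_def, norm_smul, norm_inv, RCLike.norm_ofReal, abs_of_nonneg (norm_nonneg x),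
      inv_mul_cancel₀ (ne_of_gt hxn)]
  have huf : ∀ j, f j u ≠ 0 := by
    intro j
    rw [hu_def, map_smul, smul_eq_mul]
    exact mul_ne_zero (inv_ne_zero (by exact_mod_cast ne_of_gt hxn)) (hxf j)
  have hug : ∀ k, g k u ≠ 0 := by
    intro k
    rw [hu_def, map_smul, smul_eq_mul]
    exact mul_ne_zero (inv_ne_zero (by exact_mod_cast ne_of_gt hxn)) (hxg k)
  -- every frame coefficient of a unit vector is ≤ 1
  have keyf : ∀ (y : X), ‖y‖ = 1 → ∀ j, ‖f j y‖ ≤ 1 := by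
    intro y hy j
    have h1 : ‖f j y‖ ^ p ≤ 1 := by
      have hs := hf y
      rw [hy, Real.one_rpow] at hs
      calc ‖f j y‖ ^ p ≤ ∑ j', ‖f j' y‖ ^ p :=
            Finset.single_le_sum (f := fun i => ‖f i y‖ ^ p)
              (fun i _ => Real.rpow_nonneg (norm_nonneg _) p) (Finset.mem_univ j)
        _ = 1 := hs.symm
    by_contra h
    push_neg at h
    have : (1:ℝ) < ‖f j y‖ ^ p :=
      Real.one_lt_rpow_iff_of_pos (lt_trans one_pos h) |>.mpr (Or.inl ⟨h, hp0⟩)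
    linarith
  have keyg : ∀ (y : X), ‖y‖ = 1 → ∀ k, ‖g k y‖ ≤ 1 := by
    intro y hy k
    have h1 : ‖g k y‖ ^ p ≤ 1 := by
      have hs := hg y
      rw [hy, Real.one_rpow] at hs
      calc ‖g k y‖ ^ p ≤ ∑ k', ‖g k' y‖ ^ p :=
            Finset.single_le_sum (f := fun i => ‖g i y‖ ^ p)
              (fun i _ => Real.rpow_nonneg (norm_nonneg _) p) (Finset.mem_univ k)
        _ = 1 := hs.symm
    by_contra h
    push_neg at h
    have : (1:ℝ) < ‖g k y‖ ^ p :=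
      Real.one_lt_rpow_iff_of_pos (lt_trans one_pos h) |>.mpr (Or.inl ⟨h, hp0⟩)
    linarith
  -- pick maximizers
  obtain ⟨j0, hj0⟩ := Finite.exists_max (fun j => ‖f j u‖)
  obtain ⟨k0, hk0⟩ := Finite.exists_max (fun k => ‖g k u‖)
  set M1 : ℝ := ‖f j0 u‖ with hM1def
  set M2 : ℝ := ‖g k0 u‖ with hM2def
  have hM1 : 0 < M1 := norm_pos_iff.mpr (huf j0)
  have hM2 : 0 < M2 := norm_pos_iff.mpr (hug k0)
  -- entropy bounds
  have hsumf : ∑ j, ‖f j u‖ ^ p = 1 := by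
    rw [← hf u, hu, Real.one_rpow]
  have hsumg : ∑ k, ‖g k u‖ ^ p = 1 := by
    rw [← hg u, hu, Real.one_rpow]
  have Ef : -∑ j, ‖f j u‖ ^ p * Real.log (‖f j u‖ ^ p) ≥ -Real.log (M1 ^ p) :=
    entropy_ge _ (fun j => Real.rpow_pos_of_pos (norm_pos_iff.mpr (huf j)) p) hsumf _
      (fun j => Real.rpow_le_rpow (norm_nonneg _) (hj0 j) hp0.le)
  have Eg : -∑ k, ‖g k u‖ ^ p * Real.log (‖g k u‖ ^ p) ≥ -Real.log (M2 ^ p) :=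
    entropy_ge _ (fun k => Real.rpow_pos_of_pos (norm_pos_iff.mpr (hug k)) p) hsumg _
      (fun k => Real.rpow_le_rpow (norm_nonneg _) (hk0 k) hp0.le)
  rw [Real.log_rpow hM1] at Ef
  rw [Real.log_rpow hM2] at Eg
  -- the sup is at least M1 * M2
  set S := (⨆ y : {y : X // ‖y‖ = 1 ∧ (∀ j, f j y ≠ 0) ∧ (∀ k, g k y ≠ 0)},
      ⨆ j, ⨆ k, ‖f j (y : X)‖ * ‖g k (y : X)‖) with hSdef
  have hbdd : ∀ (y : {y : X // ‖y‖ = 1 ∧ (∀ j, f j y ≠ 0) ∧ (∀ k, g k y ≠ 0)}),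
      (⨆ j, ⨆ k, ‖f j (y : X)‖ * ‖g k (y : X)‖) ≤ 1 := by
    rintro ⟨y, hy1, hy2, hy3⟩
    apply ciSup_le
    intro j
    apply ciSup_le
    intro k
    exact mul_le_one₀ (keyf y hy1 j) (norm_nonneg _) (keyg y hy1 k)
  have hSge : M1 * M2 ≤ S := by
    have s1 : M1 * M2 ≤ ⨆ k, ‖f j0 u‖ * ‖g k u‖ :=
      le_ciSup (f := fun k => ‖f j0 u‖ * ‖g k u‖) (Set.finite_range _).bddAbove k0
    have s2 : (⨆ k, ‖f j0 u‖ * ‖g k u‖) ≤ ⨆ j, ⨆ k, ‖f j u‖ * ‖g k u‖ :=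
      le_ciSup (f := fun j => ⨆ k, ‖f j u‖ * ‖g k u‖) (Set.finite_range _).bddAbove j0
    have s3 : (⨆ j, ⨆ k, ‖f j u‖ * ‖g k u‖) ≤ S := by
      apply le_ciSup (f := fun y : {y : X // ‖y‖ = 1 ∧ (∀ j, f j y ≠ 0) ∧ (∀ k, g k y ≠ 0)} =>
        ⨆ j, ⨆ k, ‖f j (y : X)‖ * ‖g k (y : X)‖)
        (c := ⟨u, hu, huf, hug⟩)
      exact ⟨1, by rintro _ ⟨y, rfl⟩; exact hbdd y⟩
    exact le_trans (le_trans s1 s2) s3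
  have hlog : Real.log (M1 * M2) ≤ Real.log S :=
    Real.log_le_log (mul_pos hM1 hM2) hSge
  have hmul : p * Real.log (M1 * M2) ≤ p * Real.log S :=
    mul_le_mul_of_nonneg_left hlog hp0.le
  rw [Real.log_mul (ne_of_gt hM1) (ne_of_gt hM2)] at hmul
  have goal : -p * Real.log S ≤ -(p * Real.log M1) + -(p * Real.log M2) := by
    nlinarith
  calc -p * Real.log S ≤ -(p * Real.log M1) + -(p * Real.log M2) := goal
    _ ≤ _ := add_le_add Ef Eg
end

section
/- Let X be a finite-dimensional normed space over ℝ or ℂ, let 1 ≤ p < ∞, let n ≥ 2, and let {f_j}_{j=1}^n and {g_k}_{k=1}^m be Parseval p-frames for X. Then for every y ∈ X with ‖y‖ = 1 such that f_j(y) ≠ 0 for all 1≤j≤n and g_k(y) ≠ 0 for all 1≤k≤m, we have max_{1≤j≤n, 1≤k≤m} |f_j(y) g_k(y)| < 1. -/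
theorem stmt_3 {𝕜 X : Type*} [RCLike 𝕜] [NormedAddCommGroup X] [NormedSpace 𝕜 X]
    [FiniteDimensional 𝕜 X] [Nontrivial X]
    (p : ℝ) (hp : 1 ≤ p) {n m : ℕ} (hn : 2 ≤ n)
    (f : Fin n → X →L[𝕜] 𝕜) (g : Fin m → X →L[𝕜] 𝕜)
    (hf : ∀ x : X, ‖x‖ ^ p = ∑ j, ‖f j x‖ ^ p)
    (hg : ∀ x : X, ‖x‖ ^ p = ∑ k, ‖g k x‖ ^ p)
    (y : X) (hy : ‖y‖ = 1) (hyf : ∀ j, f j y ≠ 0) (hyg : ∀ k, g k y ≠ 0) :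
    (⨆ j, ⨆ k, ‖f j y‖ * ‖g k y‖) < 1 := by
  have hp0 : 0 < p := lt_of_lt_of_le one_pos hp
  have hfy : (1:ℝ) = ∑ j, ‖f j y‖ ^ p := by
    have := hf y; rwa [hy, Real.one_rpow] at this
  have hgy : (1:ℝ) = ∑ k, ‖g k y‖ ^ p := by
    have := hg y; rwa [hy, Real.one_rpow] at this
  have hm : m ≠ 0 := by
    rintro rfl
    simp at hgy
  haveI : Nonempty (Fin m) := ⟨⟨0, Nat.pos_of_ne_zero hm⟩⟩
  haveI : Nonempty (Fin n) := ⟨⟨0, by omega⟩⟩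
  -- each ‖g k y‖ ≤ 1
  have hgle : ∀ k, ‖g k y‖ ≤ 1 := by
    intro k
    have h1 : ‖g k y‖ ^ p ≤ 1 := by
      rw [hgy]
      exact Finset.single_le_sum (f := fun i => ‖g i y‖ ^ p)
        (fun i _ => Real.rpow_nonneg (norm_nonneg _) p) (Finset.mem_univ k)
    by_contra h
    push_neg at h
    have h2 : 1 < ‖g k y‖ ^ p :=
      (Real.one_lt_rpow_iff_of_pos (lt_trans one_pos h)).mpr (Or.inl ⟨h, hp0⟩)
    linarith
  -- each ‖f j y‖ < 1
  have hflt : ∀ j, ‖f j y‖ < 1 := by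
    intro j
    obtain ⟨j', hj'⟩ : ∃ j' : Fin n, j' ≠ j := by
      haveI : Nontrivial (Fin n) := Fin.nontrivial_iff_two_le.mpr hn
      exact exists_ne j
    have hpos : 0 < ‖f j' y‖ ^ p :=
      Real.rpow_pos_of_pos (norm_pos_iff.mpr (hyf j')) p
    have h1 : ‖f j y‖ ^ p < 1 := by
      rw [hfy]
      have := Finset.sum_le_sum_of_subset_of_nonneg (f := fun i => ‖f i y‖ ^ p)
        (Finset.subset_univ {j, j'}) (fun i _ _ => Real.rpow_nonneg (norm_nonneg _) p)
      rw [Finset.sum_pair (Ne.symm hj')] at this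
      linarith
    by_contra h
    push_neg at h
    have h2 : 1 ≤ ‖f j y‖ ^ p := Real.one_le_rpow h hp0.le
    linarith
  obtain ⟨j0, hj0⟩ := Finite.exists_max (fun j : Fin n => ⨆ k, ‖f j y‖ * ‖g k y‖)
  refine lt_of_le_of_lt (ciSup_le hj0) ?_
  refine lt_of_le_of_lt (ciSup_le (fun k => ?_)) (hflt j0)
  calc ‖f j0 y‖ * ‖g k y‖ ≤ ‖f j0 y‖ * 1 :=
        mul_le_mul_of_nonneg_left (hgle k) (norm_nonneg _)
    _ = ‖f j0 y‖ := mul_one _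
end

section
/- Let H be a finite-dimensional (nonzero) Hilbert space over ℝ or ℂ and let {τ_j}_{j=1}^n and {ω_j}_{j=1}^n be two orthonormal bases for H. Then for every h ∈ H with ⟨h, τ_j⟩ ≠ 0 for all 1≤j≤n and ⟨h, ω_j⟩ ≠ 0 for all 1≤j≤n, S_τ(h) + S_ω(h) ≥ -2 log( (1 + max_{1≤j,k≤n} |⟨τ_j, ω_k⟩|) / 2 ). -/
/-!
Rotating unit vectors `x`, `y` by phases `α`, `β` that make `α ⟪u, x⟫` and `β ⟪u, y⟫` nonnegative
gives `|⟪u, x⟫| + |⟪u, y⟫| ≤ ‖u‖ ‖α x + β y‖` and `‖α x + β y‖² ≤ 2 (1 + |⟪x, y⟫|)`, so for a unit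
vector `u` every product `|⟪u, τ j⟫|² |⟪u, ω k⟫|²` is at most `M²`, `M = (1 + max |⟪τ j, ω k⟫|) / 2`.
The product distribution `p j q k` is therefore bounded by `M²`, so its Shannon entropy, which is
`S_τ + S_ω`, is at least `-log M²`.
-/

open Real

section Entropy

lemma neg_mul_log_le_negMulLog {r c : ℝ} (hr : 0 ≤ r) (hrc : r ≤ c) :
    -(r * log c) ≤ negMulLog r := by
  rcases hr.eq_or_lt with rfl | hr
  · simp
  · rw [negMulLog, neg_mul, neg_le_neg_iff]
    exact mul_le_mul_of_nonneg_left (log_le_log hr hrc) hr.le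

variable {ι κ : Type*} [Fintype ι] [Fintype κ]

lemma neg_log_le_sum_negMulLog {r : ι → ℝ} {c : ℝ} (hr : ∀ i, 0 ≤ r i)
    (hr1 : ∑ i, r i = 1) (hrc : ∀ i, r i ≤ c) : -log c ≤ ∑ i, negMulLog (r i) :=
  calc -log c = ∑ i, -(r i * log c) := by
        rw [Finset.sum_neg_distrib, ← Finset.sum_mul, hr1, one_mul]
    _ ≤ ∑ i, negMulLog (r i) :=
        Finset.sum_le_sum fun i _ => neg_mul_log_le_negMulLog (hr i) (hrc i)

lemma sum_negMulLog_mul {p : ι → ℝ} {q : κ → ℝ} (hp1 : ∑ j, p j = 1) (hq1 : ∑ k, q k = 1) :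
    ∑ x : ι × κ, negMulLog (p x.1 * q x.2) = ∑ j, negMulLog (p j) + ∑ k, negMulLog (q k) := by
  simp only [Fintype.sum_prod_type, negMulLog_mul, Finset.sum_add_distrib, ← Finset.sum_mul,
    ← Finset.mul_sum, hp1, hq1, one_mul]

lemma neg_log_le_sum_negMulLog_add_sum_negMulLog {p : ι → ℝ} {q : κ → ℝ} {c : ℝ}
    (hp : ∀ j, 0 ≤ p j) (hq : ∀ k, 0 ≤ q k) (hp1 : ∑ j, p j = 1) (hq1 : ∑ k, q k = 1)
    (hpq : ∀ j k, p j * q k ≤ c) :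
    -log c ≤ ∑ j, negMulLog (p j) + ∑ k, negMulLog (q k) := by
  rw [← sum_negMulLog_mul hp1 hq1]
  refine neg_log_le_sum_negMulLog (fun x => mul_nonneg (hp x.1) (hq x.2)) ?_ fun x => hpq x.1 x.2
  rw [Fintype.sum_prod_type, ← Fintype.sum_mul_sum, hp1, hq1, one_mul]

end Entropy

section Inner

variable {𝕜 H : Type*} [RCLike 𝕜] [NormedAddCommGroup H] [InnerProductSpace 𝕜 H]

lemma norm_smul_add_smul_sq_le {α β : 𝕜} {x y : H} (hα : ‖α‖ = 1) (hβ : ‖β‖ = 1)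
    (hx : ‖x‖ = 1) (hy : ‖y‖ = 1) :
    ‖α • x + β • y‖ ^ 2 ≤ 2 * (1 + ‖(inner 𝕜 x y : 𝕜)‖) := by
  have hxy : ‖(inner 𝕜 (α • x) (β • y) : 𝕜)‖ = ‖(inner 𝕜 x y : 𝕜)‖ := by
    rw [inner_smul_left, inner_smul_right, norm_mul, norm_mul, RCLike.norm_conj, hα, hβ,
      one_mul, one_mul]
  rw [@norm_add_sq 𝕜, norm_smul, norm_smul, hα, hβ, hx, hy]
  linarith [hxy ▸ RCLike.re_le_norm (inner 𝕜 (α • x) (β • y) : 𝕜)]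

lemma norm_inner_mul_norm_inner_le {u x y : H} (hx : ‖x‖ = 1) (hy : ‖y‖ = 1) :
    ‖(inner 𝕜 u x : 𝕜)‖ * ‖(inner 𝕜 u y : 𝕜)‖ ≤ ‖u‖ ^ 2 * ((1 + ‖(inner 𝕜 x y : 𝕜)‖) / 2) := by
  set a : 𝕜 := inner 𝕜 u x
  set c : 𝕜 := inner 𝕜 u y
  obtain ⟨α, hα, hαa⟩ := RCLike.exists_norm_eq_mul_self a
  obtain ⟨β, hβ, hβc⟩ := RCLike.exists_norm_eq_mul_self c
  have hsum : ‖a‖ + ‖c‖ ≤ ‖u‖ * ‖α • x + β • y‖ :=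
    calc ‖a‖ + ‖c‖ = ‖(inner 𝕜 u (α • x + β • y) : 𝕜)‖ := by
          rw [inner_add_right, inner_smul_right, inner_smul_right, ← hαa, ← hβc,
            ← RCLike.ofReal_add, RCLike.norm_ofReal, abs_of_nonneg (by positivity)]
      _ ≤ ‖u‖ * ‖α • x + β • y‖ := norm_inner_le_norm _ _
  have hsq := pow_le_pow_left₀ (by positivity) hsum 2
  rw [mul_pow] at hsq
  have := norm_smul_add_smul_sq_le hα hβ hx hy
  nlinarith [sq_nonneg (‖a‖ - ‖c‖), mul_le_mul_of_nonneg_left this (sq_nonneg ‖u‖)]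

end Inner

theorem stmt_7_general {𝕜 H : Type*} [RCLike 𝕜] [NormedAddCommGroup H] [InnerProductSpace 𝕜 H]
    [Nontrivial H] {n : ℕ}
    (τ : OrthonormalBasis (Fin n) 𝕜 H) (ω : OrthonormalBasis (Fin n) 𝕜 H)
    (h : H) (hτ : ∀ j, (inner 𝕜 h (τ j) : 𝕜) ≠ 0) :
    (-∑ j, ‖(inner 𝕜 ((‖h‖ : 𝕜)⁻¹ • h) (τ j) : 𝕜)‖ ^ 2 *
        Real.log (‖(inner 𝕜 ((‖h‖ : 𝕜)⁻¹ • h) (τ j) : 𝕜)‖ ^ 2)) +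
      (-∑ j, ‖(inner 𝕜 ((‖h‖ : 𝕜)⁻¹ • h) (ω j) : 𝕜)‖ ^ 2 *
        Real.log (‖(inner 𝕜 ((‖h‖ : 𝕜)⁻¹ • h) (ω j) : 𝕜)‖ ^ 2)) ≥
      -2 * Real.log ((1 + ⨆ j, ⨆ k, ‖(inner 𝕜 (τ j) (ω k) : 𝕜)‖) / 2) := by
  obtain ⟨j₀⟩ := τ.toBasis.index_nonempty
  have hh : h ≠ 0 := by
    rintro rfl
    exact hτ j₀ (inner_zero_left _)
  set u := (‖h‖ : 𝕜)⁻¹ • h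
  have hu : ‖u‖ = 1 := norm_smul_inv_norm hh
  set b := ⨆ j, ⨆ k, ‖(inner 𝕜 (τ j) (ω k) : 𝕜)‖
  have hb : ∀ j k, ‖(inner 𝕜 (τ j) (ω k) : 𝕜)‖ ≤ b := fun j k =>
    le_ciSup_of_le (Finite.bddAbove_range _) j
      (le_ciSup (f := fun k => ‖(inner 𝕜 (τ j) (ω k) : 𝕜)‖) (Finite.bddAbove_range _) k)
  have hlog : -2 * log ((1 + b) / 2) = -log (((1 + b) / 2) ^ 2) := by
    rw [log_pow]; push_cast; ring
  rw [ge_iff_le, hlog]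
  -- both entropies are now `∑ negMulLog _` up to unfolding `negMulLog x = -x * log x`
  simp only [← neg_mul, ← Finset.sum_neg_distrib]
  refine neg_log_le_sum_negMulLog_add_sum_negMulLog (fun _ => sq_nonneg _) (fun _ => sq_nonneg _)
    (by rw [τ.sum_sq_norm_inner_left, hu, one_pow]) (by rw [ω.sum_sq_norm_inner_left, hu, one_pow])
    fun j k => ?_
  rw [← mul_pow]
  refine pow_le_pow_left₀ (by positivity) ?_ 2
  calc _ ≤ ‖u‖ ^ 2 * ((1 + ‖(inner 𝕜 (τ j) (ω k) : 𝕜)‖) / 2) :=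
        norm_inner_mul_norm_inner_le (τ.orthonormal.1 j) (ω.orthonormal.1 k)
    _ ≤ (1 + b) / 2 := by rw [hu, one_pow, one_mul]; linarith [hb j k]

theorem stmt_7 {𝕜 H : Type*} [RCLike 𝕜] [NormedAddCommGroup H] [InnerProductSpace 𝕜 H]
    [FiniteDimensional 𝕜 H] [Nontrivial H] {n : ℕ}
    (τ : OrthonormalBasis (Fin n) 𝕜 H) (ω : OrthonormalBasis (Fin n) 𝕜 H)
    (h : H) (hτ : ∀ j, (inner 𝕜 h (τ j) : 𝕜) ≠ 0) (hω : ∀ j, (inner 𝕜 h (ω j) : 𝕜) ≠ 0) :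
    (-∑ j, ‖(inner 𝕜 ((‖h‖ : 𝕜)⁻¹ • h) (τ j) : 𝕜)‖ ^ 2 *
        Real.log (‖(inner 𝕜 ((‖h‖ : 𝕜)⁻¹ • h) (τ j) : 𝕜)‖ ^ 2)) +
      (-∑ j, ‖(inner 𝕜 ((‖h‖ : 𝕜)⁻¹ • h) (ω j) : 𝕜)‖ ^ 2 *
        Real.log (‖(inner 𝕜 ((‖h‖ : 𝕜)⁻¹ • h) (ω j) : 𝕜)‖ ^ 2)) ≥
      -2 * Real.log ((1 + ⨆ j, ⨆ k, ‖(inner 𝕜 (τ j) (ω k) : 𝕜)‖) / 2) :=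
  stmt_7_general τ ω h hτ
end

section
/- Let H be a finite-dimensional (nonzero) Hilbert space over ℝ or ℂ and let {τ_j}_{j=1}^n and {ω_k}_{k=1}^n be two orthonormal bases for H. Then sup_{h ∈ H, ‖h‖=1} max_{1≤j,k≤n} |⟨h, τ_j⟩ ⟨h, ω_k⟩| ≤ (1 + max_{1≤j,k≤n} |⟨τ_j, ω_k⟩|) / 2. -/
/-!
Buzano's inequality: for a unit vector `u`, the reflection `R` in the line `𝕜 ∙ u` is an isometry
with `⟪x, R y⟫ = 2 ⟪x, u⟫ ⟪u, y⟫ - ⟪x, y⟫`, so `2 ‖⟪x, u⟫ ⟪u, y⟫‖ ≤ ‖⟪x, y⟫‖ + ‖x‖ ‖y‖`.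
Applied to `x = τ j`, `y = ω k` and a unit vector `u = h`, this bounds every term of the supremum.
-/

open Submodule

section Buzano

variable {𝕜 E : Type*} [RCLike 𝕜] [NormedAddCommGroup E] [InnerProductSpace 𝕜 E]

local notation "⟪" x ", " y "⟫" => inner 𝕜 x y

theorem inner_reflection_span_unit {u : E} (hu : ‖u‖ = 1) (x y : E) :
    ⟪x, (𝕜 ∙ u).reflection y⟫ = 2 * (⟪x, u⟫ * ⟪u, y⟫) - ⟪x, y⟫ := by
  rw [reflection_apply, starProjection_unit_singleton 𝕜 hu, inner_sub_right, two_smul,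
    inner_add_right, inner_smul_right]
  ring

theorem norm_inner_mul_norm_inner_le_of_norm_eq_one {u : E} (hu : ‖u‖ = 1) (x y : E) :
    ‖⟪x, u⟫‖ * ‖⟪u, y⟫‖ ≤ (‖x‖ * ‖y‖ + ‖⟪x, y⟫‖) / 2 := by
  have hreflect : ‖⟪x, (𝕜 ∙ u).reflection y⟫‖ ≤ ‖x‖ * ‖y‖ := by
    simpa only [LinearIsometryEquiv.norm_map] using norm_inner_le_norm (𝕜 := 𝕜) x ((𝕜 ∙ u).reflection y)
  have htwice : 2 * (‖⟪x, u⟫‖ * ‖⟪u, y⟫‖) ≤ ‖⟪x, (𝕜 ∙ u).reflection y⟫‖ + ‖⟪x, y⟫‖ := by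
    calc 2 * (‖⟪x, u⟫‖ * ‖⟪u, y⟫‖) = ‖⟪x, (𝕜 ∙ u).reflection y⟫ + ⟪x, y⟫‖ := by
          rw [inner_reflection_span_unit hu, sub_add_cancel, norm_mul, norm_mul, RCLike.norm_two]
      _ ≤ ‖⟪x, (𝕜 ∙ u).reflection y⟫‖ + ‖⟪x, y⟫‖ := norm_add_le _ _
  linarith

end Buzano

theorem stmt_9_general {𝕜 H : Type*} [RCLike 𝕜] [NormedAddCommGroup H] [InnerProductSpace 𝕜 H]
    {n : ℕ}
    (τ : OrthonormalBasis (Fin n) 𝕜 H) (ω : OrthonormalBasis (Fin n) 𝕜 H) :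
    (⨆ h : {h : H // ‖h‖ = 1}, ⨆ j, ⨆ k, ‖(inner 𝕜 (h : H) (τ j) : 𝕜)‖ * ‖(inner 𝕜 (h : H) (ω k) : 𝕜)‖)
      ≤ (1 + ⨆ j, ⨆ k, ‖(inner 𝕜 (τ j) (ω k) : 𝕜)‖) / 2 := by
  set S : ℝ := ⨆ j, ⨆ k, ‖(inner 𝕜 (τ j) (ω k) : 𝕜)‖
  have hS_nonneg : 0 ≤ S := Real.iSup_nonneg fun j => Real.iSup_nonneg fun k => norm_nonneg _
  have hS_ge (j k : Fin n) : ‖(inner 𝕜 (τ j) (ω k) : 𝕜)‖ ≤ S :=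
    le_ciSup_of_le (Finite.bddAbove_range _) j <|
      le_ciSup (f := fun k => ‖(inner 𝕜 (τ j) (ω k) : 𝕜)‖) (Finite.bddAbove_range _) k
  -- `Real.iSup_le` needs only a nonnegative bound, as an empty real supremum is `0`.
  have hbound : 0 ≤ (1 + S) / 2 := by linarith
  refine Real.iSup_le (fun h => Real.iSup_le (fun j => Real.iSup_le (fun k => ?_) hbound) hbound)
    hbound
  have hbuzano := norm_inner_mul_norm_inner_le_of_norm_eq_one (𝕜 := 𝕜) h.2 (τ j) (ω k)
  rw [norm_inner_symm, τ.orthonormal.1 j, ω.orthonormal.1 k, one_mul] at hbuzano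
  linarith [hS_ge j k]

theorem stmt_9 {𝕜 H : Type*} [RCLike 𝕜] [NormedAddCommGroup H] [InnerProductSpace 𝕜 H]
    [FiniteDimensional 𝕜 H] [Nontrivial H] {n : ℕ}
    (τ : OrthonormalBasis (Fin n) 𝕜 H) (ω : OrthonormalBasis (Fin n) 𝕜 H) :
    (⨆ h : {h : H // ‖h‖ = 1}, ⨆ j, ⨆ k, ‖(inner 𝕜 (h : H) (τ j) : 𝕜)‖ * ‖(inner 𝕜 (h : H) (ω k) : 𝕜)‖)
      ≤ (1 + ⨆ j, ⨆ k, ‖(inner 𝕜 (τ j) (ω k) : 𝕜)‖) / 2 :=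
  stmt_9_general τ ω
end

section
/- Let X be a finite-dimensional normed space over ℝ or ℂ, let 1 ≤ p < ∞, and let {τ_j}_{j=1}^n and {ω_k}_{k=1}^m be Parseval p-frames for the dual X*. Then 1/(nm)^{1/p} ≤ sup_{g ∈ X*, ‖g‖=1} max_{1≤j≤n, 1≤k≤m} |g(τ_j) g(ω_k)|. -/
/-!
Fix a unit functional `g` (Hahn–Banach). Since `∑ⱼ ‖g τⱼ‖ᵖ = ‖g‖ᵖ = 1`, some term is at least
`1 / n`, so `‖g τⱼ‖ ≥ n^(-1/p)` for some `j`; likewise `‖g ωₖ‖ ≥ m^(-1/p)` for some `k`, and the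
product of the two is `(nm)^(-1/p)`. The same identity gives `‖g τⱼ‖ ≤ ‖g‖`, which bounds the
supremum.
-/

open Finset

lemma Real.exists_one_div_card_rpow_le_of_sum_rpow_eq_one {ι : Type*} [Fintype ι] {p : ℝ}
    (hp : 0 < p) {a : ι → ℝ} (ha : ∀ i, 0 ≤ a i) (hsum : ∑ i, a i ^ p = 1) :
    ∃ i, 1 / (Fintype.card ι : ℝ) ^ (1 / p) ≤ a i := by
  have hne : (univ : Finset ι).Nonempty := nonempty_of_sum_ne_zero (by rw [hsum]; exact one_ne_zero)
  have hcard : (0 : ℝ) < Fintype.card ι := by exact_mod_cast Fintype.card_pos_iff.mpr hne.to_type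
  obtain ⟨i, -, hi⟩ := exists_le_of_sum_le hne (f := fun _ ↦ 1 / (Fintype.card ι : ℝ))
    (g := fun i ↦ a i ^ p) (by simp [hsum, hcard.ne'])
  refine ⟨i, (Real.rpow_le_rpow_iff (by positivity) (ha i) hp).mp ?_⟩
  rwa [Real.div_rpow zero_le_one (by positivity), Real.one_rpow, ← Real.rpow_mul hcard.le,
    one_div_mul_cancel hp.ne', Real.rpow_one]

def IsParsevalPFrame (𝕜 : Type*) {X ι : Type*} [RCLike 𝕜] [NormedAddCommGroup X]
    [NormedSpace 𝕜 X] [Fintype ι] (p : ℝ) (τ : ι → X) : Prop :=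
  ∀ f : X →L[𝕜] 𝕜, ‖f‖ ^ p = ∑ j, ‖f (τ j)‖ ^ p

namespace IsParsevalPFrame

variable {𝕜 X ι : Type*} [RCLike 𝕜] [NormedAddCommGroup X] [NormedSpace 𝕜 X] [Fintype ι]
  {p : ℝ} {τ : ι → X}

lemma norm_apply_le (hτ : IsParsevalPFrame 𝕜 p τ) (hp : 0 < p) (f : X →L[𝕜] 𝕜) (j : ι) :
    ‖f (τ j)‖ ≤ ‖f‖ := by
  refine (Real.rpow_le_rpow_iff (norm_nonneg _) (norm_nonneg _) hp).mp ?_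
  rw [hτ f]
  exact single_le_sum (f := fun j ↦ ‖f (τ j)‖ ^ p) (fun _ _ ↦ by positivity) (mem_univ j)

lemma exists_one_div_card_rpow_le_norm_apply (hτ : IsParsevalPFrame 𝕜 p τ) (hp : 0 < p)
    {g : X →L[𝕜] 𝕜} (hg : ‖g‖ = 1) :
    ∃ j, 1 / (Fintype.card ι : ℝ) ^ (1 / p) ≤ ‖g (τ j)‖ :=
  Real.exists_one_div_card_rpow_le_of_sum_rpow_eq_one hp (fun _ ↦ norm_nonneg _)
    (by rw [← hτ g, hg, Real.one_rpow])

end IsParsevalPFrame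

theorem stmt_10_general {𝕜 X : Type*} [RCLike 𝕜] [NormedAddCommGroup X] [NormedSpace 𝕜 X]
    [Nontrivial X]
    (p : ℝ) (hp : 1 ≤ p) {n m : ℕ}
    (τ : Fin n → X) (ω : Fin m → X)
    (hτ : ∀ f : X →L[𝕜] 𝕜, ‖f‖ ^ p = ∑ j, ‖f (τ j)‖ ^ p)
    (hω : ∀ f : X →L[𝕜] 𝕜, ‖f‖ ^ p = ∑ k, ‖f (ω k)‖ ^ p) :
    1 / ((n * m : ℝ) ^ (1 / p)) ≤
      ⨆ g : {g : X →L[𝕜] 𝕜 // ‖g‖ = 1}, ⨆ j, ⨆ k, ‖(g : X →L[𝕜] 𝕜) (τ j)‖ * ‖(g : X →L[𝕜] 𝕜) (ω k)‖ := by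
  have hp0 : 0 < p := one_pos.trans_le hp
  obtain ⟨x, hx⟩ := exists_ne (0 : X)
  obtain ⟨g, hg, -⟩ := exists_dual_vector 𝕜 x (norm_ne_zero_iff.mpr hx)
  obtain ⟨j, hj⟩ := IsParsevalPFrame.exists_one_div_card_rpow_le_norm_apply hτ hp0 hg
  obtain ⟨k, hk⟩ := IsParsevalPFrame.exists_one_div_card_rpow_le_norm_apply hω hp0 hg
  rw [Fintype.card_fin] at hj hk
  have hbdd : BddAbove (Set.range fun g : {g : X →L[𝕜] 𝕜 // ‖g‖ = 1} ↦
      ⨆ j, ⨆ k, ‖(g : X →L[𝕜] 𝕜) (τ j)‖ * ‖(g : X →L[𝕜] 𝕜) (ω k)‖) := by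
    refine ⟨1, Set.forall_mem_range.mpr fun g ↦ Real.iSup_le (fun j ↦ Real.iSup_le (fun k ↦ ?_)
      zero_le_one) zero_le_one⟩
    have hτg := IsParsevalPFrame.norm_apply_le hτ hp0 g j
    have hωg := IsParsevalPFrame.norm_apply_le hω hp0 g k
    rw [g.2] at hτg hωg
    exact mul_le_one₀ hτg (norm_nonneg _) hωg
  calc 1 / ((n * m : ℝ) ^ (1 / p))
      = 1 / (n : ℝ) ^ (1 / p) * (1 / (m : ℝ) ^ (1 / p)) := by
        rw [Real.mul_rpow (Nat.cast_nonneg n) (Nat.cast_nonneg m), one_div_mul_one_div]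
    _ ≤ ‖g (τ j)‖ * ‖g (ω k)‖ := mul_le_mul hj hk (by positivity) (norm_nonneg _)
    _ ≤ _ := le_ciSup_of_le hbdd ⟨g, hg⟩ <| le_ciSup_of_le (Set.finite_range _).bddAbove j <|
        le_ciSup (f := fun k ↦ ‖g (τ j)‖ * ‖g (ω k)‖) (Set.finite_range _).bddAbove k

theorem stmt_10 {𝕜 X : Type*} [RCLike 𝕜] [NormedAddCommGroup X] [NormedSpace 𝕜 X]
    [FiniteDimensional 𝕜 X] [Nontrivial X]
    (p : ℝ) (hp : 1 ≤ p) {n m : ℕ}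
    (τ : Fin n → X) (ω : Fin m → X)
    (hτ : ∀ f : X →L[𝕜] 𝕜, ‖f‖ ^ p = ∑ j, ‖f (τ j)‖ ^ p)
    (hω : ∀ f : X →L[𝕜] 𝕜, ‖f‖ ^ p = ∑ k, ‖f (ω k)‖ ^ p) :
    1 / ((n * m : ℝ) ^ (1 / p)) ≤
      ⨆ g : {g : X →L[𝕜] 𝕜 // ‖g‖ = 1}, ⨆ j, ⨆ k, ‖(g : X →L[𝕜] 𝕜) (τ j)‖ * ‖(g : X →L[𝕜] 𝕜) (ω k)‖ :=
  stmt_10_general p hp τ ω hτ hω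
end

section
/- Let X be a finite-dimensional normed space over ℝ or ℂ, let 1 ≤ p < ∞, and let {τ_j}_{j=1}^n and {ω_k}_{k=1}^m be Parseval p-frames for the dual X*. Set X*_τ := {f ∈ X* : f(τ_j) ≠ 0 for all 1≤j≤n} and X*_ω := {f ∈ X* : f(ω_k) ≠ 0 for all 1≤k≤m}. Then for every f ∈ X*_τ ∩ X*_ω, S_τ(f) + S_ω(f) ≥ -p · log( sup_{g ∈ X*_τ ∩ X*_ω, ‖g‖=1} max_{1≤j≤n, 1≤k≤m} |g(τ_j) g(ω_k)| ). -/
/-!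
After normalising `f` to `g = f / ‖f‖`, the weights `|g(τ_j)|^p` form a probability vector, and the
entropy of a probability vector is at least `-log` of its largest weight. Hence
`S_τ(f) + S_ω(f) ≥ -p log (|g(τ_j)| |g(ω_k)|)` for suitable `j, k`, and `g` is one of the
functionals over which the supremum is taken.
-/

open Real

lemma exists_neg_log_le_neg_sum_mul_log {ι : Type*} [Fintype ι] (a : ι → ℝ)
    (ha : ∀ i, 0 < a i) (hsum : ∑ i, a i = 1) :
    ∃ i, -log (a i) ≤ -∑ j, a j * log (a j) := by
  have : Nonempty ι := by
    by_contra h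
    simp [not_nonempty_iff.mp h] at hsum
  obtain ⟨i, hi⟩ := Finite.exists_max a
  have hle : ∑ j, a j * log (a j) ≤ ∑ j, a j * log (a i) :=
    Finset.sum_le_sum fun j _ => mul_le_mul_of_nonneg_left (log_le_log (ha j) (hi j)) (ha j).le
  rw [← Finset.sum_mul, hsum, one_mul] at hle
  exact ⟨i, neg_le_neg hle⟩

lemma sum_div_rpow_eq_one {ι : Type*} [Fintype ι] {p r : ℝ} {x : ι → ℝ} (hx : ∀ i, 0 ≤ x i)
    (hr : 0 < r) (h : r ^ p = ∑ i, x i ^ p) : ∑ i, (x i / r) ^ p = 1 := by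
  simp_rw [div_rpow (hx _) hr.le, ← Finset.sum_div, ← h]
  exact div_self (rpow_pos_of_pos hr p).ne'

lemma exists_neg_mul_log_le_of_parseval {𝕜 X ι : Type*} [RCLike 𝕜] [NormedAddCommGroup X]
    [NormedSpace 𝕜 X] [Fintype ι] (p : ℝ) (τ : ι → X) (f : X →L[𝕜] 𝕜)
    (hf : ‖f‖ ^ p = ∑ j, ‖f (τ j)‖ ^ p) (hf0 : f ≠ 0) (hfτ : ∀ j, f (τ j) ≠ 0) :
    ∃ i, -p * log (‖f (τ i)‖ / ‖f‖) ≤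
      -∑ j, (‖f (τ j)‖ / ‖f‖) ^ p * log ((‖f (τ j)‖ / ‖f‖) ^ p) := by
  have hpos : ∀ j, 0 < ‖f (τ j)‖ / ‖f‖ := fun j =>
    div_pos (norm_pos_iff.mpr (hfτ j)) (norm_pos_iff.mpr hf0)
  obtain ⟨i, hi⟩ := exists_neg_log_le_neg_sum_mul_log (fun j => (‖f (τ j)‖ / ‖f‖) ^ p)
    (fun j => rpow_pos_of_pos (hpos j) p)
    (sum_div_rpow_eq_one (fun _ => norm_nonneg _) (norm_pos_iff.mpr hf0) hf)
  refine ⟨i, ?_⟩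
  rwa [log_rpow (hpos i), ← neg_mul] at hi

lemma norm_mul_norm_le_iSup_iSup_iSup {𝕜 X ι κ : Type*} [RCLike 𝕜] [NormedAddCommGroup X]
    [NormedSpace 𝕜 X] [Finite ι] [Finite κ] (τ : ι → X) (ω : κ → X)
    (Q : (X →L[𝕜] 𝕜) → Prop) (g : {g : X →L[𝕜] 𝕜 // ‖g‖ = 1 ∧ Q g}) (i : ι) (k : κ) :
    ‖(g : X →L[𝕜] 𝕜) (τ i)‖ * ‖(g : X →L[𝕜] 𝕜) (ω k)‖ ≤
      ⨆ g : {g : X →L[𝕜] 𝕜 // ‖g‖ = 1 ∧ Q g},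
        ⨆ j, ⨆ l, ‖(g : X →L[𝕜] 𝕜) (τ j)‖ * ‖(g : X →L[𝕜] 𝕜) (ω l)‖ := by
  have hnorm : ∀ (g : {g : X →L[𝕜] 𝕜 // ‖g‖ = 1 ∧ Q g}) x, ‖(g : X →L[𝕜] 𝕜) x‖ ≤ ‖x‖ :=
    fun g x => by simpa [g.2.1] using (g : X →L[𝕜] 𝕜).le_opNorm x
  have hbdd : BddAbove (Set.range fun g : {g : X →L[𝕜] 𝕜 // ‖g‖ = 1 ∧ Q g} =>
      ⨆ j, ⨆ l, ‖(g : X →L[𝕜] 𝕜) (τ j)‖ * ‖(g : X →L[𝕜] 𝕜) (ω l)‖) := by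
    refine ⟨⨆ j, ⨆ l, ‖τ j‖ * ‖ω l‖, ?_⟩
    rintro _ ⟨g, rfl⟩
    exact ciSup_mono (Finite.bddAbove_range _) fun j => ciSup_mono (Finite.bddAbove_range _)
      fun l => mul_le_mul (hnorm g _) (hnorm g _) (norm_nonneg _) (norm_nonneg _)
  exact le_ciSup_of_le hbdd g <| le_ciSup_of_le (Finite.bddAbove_range _) i <|
    le_ciSup (Finite.bddAbove_range fun l =>
      ‖(g : X →L[𝕜] 𝕜) (τ i)‖ * ‖(g : X →L[𝕜] 𝕜) (ω l)‖) k

theorem stmt_12_general {𝕜 X : Type*} [RCLike 𝕜] [NormedAddCommGroup X] [NormedSpace 𝕜 X]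
    (p : ℝ) (hp : 1 ≤ p) {n m : ℕ}
    (τ : Fin n → X) (ω : Fin m → X)
    (hτ : ∀ f : X →L[𝕜] 𝕜, ‖f‖ ^ p = ∑ j, ‖f (τ j)‖ ^ p)
    (hω : ∀ f : X →L[𝕜] 𝕜, ‖f‖ ^ p = ∑ k, ‖f (ω k)‖ ^ p)
    (f : X →L[𝕜] 𝕜) (hfτ : ∀ j, f (τ j) ≠ 0) (hfω : ∀ k, f (ω k) ≠ 0) :
    (-∑ j, (‖f (τ j)‖ / ‖f‖) ^ p * Real.log ((‖f (τ j)‖ / ‖f‖) ^ p)) +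
      (-∑ k, (‖f (ω k)‖ / ‖f‖) ^ p * Real.log ((‖f (ω k)‖ / ‖f‖) ^ p)) ≥
      -p * Real.log
        (⨆ g : {g : X →L[𝕜] 𝕜 // ‖g‖ = 1 ∧ (∀ j, g (τ j) ≠ 0) ∧ (∀ k, g (ω k) ≠ 0)},
          ⨆ j, ⨆ k, ‖(g : X →L[𝕜] 𝕜) (τ j)‖ * ‖(g : X →L[𝕜] 𝕜) (ω k)‖) := by
  rcases eq_or_ne f 0 with rfl | hf0
  · -- Then `n = m = 0`, and both sides are `0` since `⨆` over an empty type is `0` and `log 0 = 0`.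
    have : IsEmpty (Fin n) := ⟨fun j => hfτ j rfl⟩
    have : IsEmpty (Fin m) := ⟨fun k => hfω k rfl⟩
    simp
  obtain ⟨j, hj⟩ := exists_neg_mul_log_le_of_parseval p τ f (hτ f) hf0 hfτ
  obtain ⟨k, hk⟩ := exists_neg_mul_log_le_of_parseval p ω f (hω f) hf0 hfω
  have hF : 0 < ‖f‖ := norm_pos_iff.mpr hf0
  have hpos : ∀ x, f x ≠ 0 → 0 < ‖f x‖ / ‖f‖ := fun x hx => div_pos (norm_pos_iff.mpr hx) hF
  set g : X →L[𝕜] 𝕜 := ((‖f‖⁻¹ : ℝ) : 𝕜) • f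
  have hg : ∀ x, ‖g x‖ = ‖f x‖ / ‖f‖ := fun x => by simp [g, div_eq_inv_mul]
  have hg1 : ‖g‖ = 1 := by simp [g, norm_smul, hF.ne']
  have hg0 : ∀ x, f x ≠ 0 → g x ≠ 0 := fun x hx =>
    norm_ne_zero_iff.mp <| (hg x).symm ▸ (hpos x hx).ne'
  have hle := norm_mul_norm_le_iSup_iSup_iSup τ ω
    (fun g => (∀ j, g (τ j) ≠ 0) ∧ ∀ k, g (ω k) ≠ 0)
    ⟨g, hg1, fun j => hg0 _ (hfτ j), fun k => hg0 _ (hfω k)⟩ j k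
  rw [hg, hg] at hle
  calc -p * log _ ≤ -p * log (‖f (τ j)‖ / ‖f‖ * (‖f (ω k)‖ / ‖f‖)) :=
        mul_le_mul_of_nonpos_left (log_le_log (mul_pos (hpos _ (hfτ j)) (hpos _ (hfω k))) hle)
          (by linarith)
    _ = -p * log (‖f (τ j)‖ / ‖f‖) + -p * log (‖f (ω k)‖ / ‖f‖) := by
        rw [log_mul (hpos _ (hfτ j)).ne' (hpos _ (hfω k)).ne']; ring
    _ ≤ _ := add_le_add hj hk

theorem stmt_12 {𝕜 X : Type*} [RCLike 𝕜] [NormedAddCommGroup X] [NormedSpace 𝕜 X]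
    [FiniteDimensional 𝕜 X] [Nontrivial X]
    (p : ℝ) (hp : 1 ≤ p) {n m : ℕ}
    (τ : Fin n → X) (ω : Fin m → X)
    (hτ : ∀ f : X →L[𝕜] 𝕜, ‖f‖ ^ p = ∑ j, ‖f (τ j)‖ ^ p)
    (hω : ∀ f : X →L[𝕜] 𝕜, ‖f‖ ^ p = ∑ k, ‖f (ω k)‖ ^ p)
    (f : X →L[𝕜] 𝕜) (hfτ : ∀ j, f (τ j) ≠ 0) (hfω : ∀ k, f (ω k) ≠ 0) :
    (-∑ j, (‖f (τ j)‖ / ‖f‖) ^ p * Real.log ((‖f (τ j)‖ / ‖f‖) ^ p)) +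
      (-∑ k, (‖f (ω k)‖ / ‖f‖) ^ p * Real.log ((‖f (ω k)‖ / ‖f‖) ^ p)) ≥
      -p * Real.log
        (⨆ g : {g : X →L[𝕜] 𝕜 // ‖g‖ = 1 ∧ (∀ j, g (τ j) ≠ 0) ∧ (∀ k, g (ω k) ≠ 0)},
          ⨆ j, ⨆ k, ‖(g : X →L[𝕜] 𝕜) (τ j)‖ * ‖(g : X →L[𝕜] 𝕜) (ω k)‖) :=
  stmt_12_general p hp τ ω hτ hω f hfτ hfω
end
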